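/- For every k with 1 ≤ k ≤ n, the subspace g₂(P₁)_{e₁…e_k} := { A ∈ g₂(P₁) : A(e_j, X) = 0 for all X ∈ V and all 1 ≤ j ≤ k } has dimension (n−k)(n−k+1)/2 + (n−k)(n−1) + (n−2)(n−1)/2, where g₂(P₁) is the space of symmetric bilinear forms A on V with A(X, C) = 0 and A(S, J X) = A(X, C) for all X ∈ V, and e_j := h_j for 1 ≤ j ≤ n−1 while e_n := S + v_1 + ⋯ + v_n. -/

import Mathlib

set_option synthInstance.maxHeartbeats 1000000
set_option maxHeartbeats 1000000

noncomputable section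

/-- The pointwise model `V = (Fin n → ℝ) × (Fin n → ℝ)` of the double tangent space
`T_x(TM)` for a spray on an `n`-dimensional manifold, in an adapted basis. -/
abbrev V (n : ℕ) : Type := (Fin n → ℝ) × (Fin n → ℝ)

/-- The vertical endomorphism `J (x, y) = (0, x)`. -/
def Jmap (n : ℕ) : V n →ₗ[ℝ] V n where
  toFun p := (0, p.1)
  map_add' a b := by simp
  map_smul' c a := by simp

/-- The horizontal projector `P_h (x, y) = (x, 0)`. -/
def Ph (n : ℕ) : V n →ₗ[ℝ] V n where
  toFun p := (p.1, 0)
  map_add' a b := by simp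
  map_smul' c a := by simp

/-- The `j`-th standard basis vector of `Fin n → ℝ`, indexed by `1 ≤ j ≤ n`
(zero if `j` is out of range). -/
def dlt (n j : ℕ) : Fin n → ℝ := fun i => if (i : ℕ) + 1 = j then 1 else 0

/-- The horizontal basis vector `h_j`, `1 ≤ j ≤ n`. -/
def hvec (n j : ℕ) : V n := (dlt n j, 0)

/-- The vertical basis vector `v_j`, `1 ≤ j ≤ n`. -/
def vvec (n j : ℕ) : V n := (0, dlt n j)

/-- The spray vector `S = h_n`. -/
def Svec (n : ℕ) : V n := hvec n n

/-- The Liouville vector `C = v_n = J S`. -/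
def Cvec (n : ℕ) : V n := vvec n n

/-- Bilinear forms on `V n`. -/
abbrev Bil (n : ℕ) := V n →ₗ[ℝ] V n →ₗ[ℝ] ℝ

/-- Trilinear forms on `V n` (bundled). -/
abbrev Tri (n : ℕ) := V n →ₗ[ℝ] V n →ₗ[ℝ] V n →ₗ[ℝ] ℝ

/-- The basis vectors `e_1, …, e_{2n}` (1-indexed): `e_j = h_j` for `j < n`,
`e_n = S + v_1 + ⋯ + v_n`, and `e_{n+j} = v_j`. -/
def evec (n j : ℕ) : V n :=
  if j < n then hvec n j
  else if j = n then Svec n + ∑ i ∈ Finset.Icc 1 n, vvec n i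
  else vvec n (j - n)

/-- The subspace `g₂(P₁)_{e₁…e_k}` of `g₂(P₁)` of forms annihilating `e_1, …, e_k`
in the first argument. -/
def g2P1e (n k : ℕ) : Submodule ℝ (Bil n) where
  carrier := {A | (∀ X Y, A X Y = A Y X) ∧ (∀ X, A X (Cvec n) = 0) ∧
    (∀ X, A (Svec n) (Jmap n X) = A X (Cvec n)) ∧
    (∀ j, 1 ≤ j → j ≤ k → ∀ X, A (evec n j) X = 0)}
  add_mem' := by
    rintro a b ⟨ha1, ha2, ha3, ha4⟩ ⟨hb1, hb2, hb3, hb4⟩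
    refine ⟨fun X Y => ?_, fun X => ?_, fun X => ?_, fun j hj1 hj2 X => ?_⟩ <;>
      simp only [LinearMap.add_apply]
    · linear_combination ha1 X Y + hb1 X Y
    · linear_combination ha2 X + hb2 X
    · linear_combination ha3 X + hb3 X
    · linear_combination ha4 j hj1 hj2 X + hb4 j hj1 hj2 X
  zero_mem' := ⟨fun X Y => by simp, fun X => by simp, fun X => by simp,
    fun j hj1 hj2 X => by simp⟩
  smul_mem' := by
    rintro c a ⟨ha1, ha2, ha3, ha4⟩
    refine ⟨fun X Y => ?_, fun X => ?_, fun X => ?_, fun j hj1 hj2 X => ?_⟩ <;>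
      simp only [LinearMap.smul_apply, smul_eq_mul]
    · linear_combination c * ha1 X Y
    · linear_combination c * ha2 X
    · linear_combination c * ha3 X
    · linear_combination c * ha4 j hj1 hj2 X

/-!
In the basis `h_i, v_i` a symmetric form is a function on unordered pairs of basis indices. The
conditions defining `g₂(P₁)_{e₁…e_k}` force it to vanish on every pair meeting one of
`h_1, …, h_k, v_n` and on the pairs `{h_n, v_j}`; when `k = n`, the condition `A(e_n, ·) = 0`
says moreover that the rows of the block on `v_1, …, v_{n-1}` sum to zero, which determines its
diagonal. The remaining entries are free: all unordered pairs of the `L = (n - k) + (n - 1)` live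
indices except `n - 1` of them (the pairs `{h_n, v_j}`, resp. the diagonal when `k = n`), so the
dimension is `C(L + 1, 2) - (n - 1)`.
-/

open Finset Sum

section RowSum

variable (K : Type*) [Field K] {α : Type*} [Fintype α]

def zeroRowSumSubmodule (Z : Finset (Sym2 α)) (D : Finset α) : Submodule K (Sym2 α → K) where
  carrier := {g | (∀ s ∈ Z, g s = 0) ∧ ∀ a ∈ D, ∑ b, g s(a, b) = 0}
  add_mem' := by
    rintro g h ⟨hgZ, hgD⟩ ⟨hhZ, hhD⟩
    exact ⟨fun s hs => by simp [hgZ s hs, hhZ s hs],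
      fun a ha => by simp [sum_add_distrib, hgD a ha, hhD a ha]⟩
  zero_mem' := ⟨fun _ _ => rfl, fun _ _ => by simp⟩
  smul_mem' := by
    rintro c g ⟨hgZ, hgD⟩
    exact ⟨fun s hs => by simp [hgZ s hs], fun a ha => by simp [← mul_sum, hgD a ha]⟩

variable {K}

theorem mem_zeroRowSumSubmodule {Z : Finset (Sym2 α)} {D : Finset α} {g : Sym2 α → K} :
    g ∈ zeroRowSumSubmodule K Z D ↔
      (∀ s ∈ Z, g s = 0) ∧ ∀ a ∈ D, ∑ b, g s(a, b) = 0 :=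
  Iff.rfl

variable [DecidableEq α]

/-- The entries outside `Z`, except the diagonal ones at `D`, which the zero row sums
determine. -/
def freePairs (Z : Finset (Sym2 α)) (D : Finset α) : Finset (Sym2 α) :=
  univ \ (Z ∪ D.image fun a => s(a, a))

namespace freePairs

variable {Z : Finset (Sym2 α)} {D : Finset α}

def extendByZero (f : freePairs Z D → K) (s : Sym2 α) : K :=
  if h : s ∈ freePairs Z D then f ⟨s, h⟩ else 0

def fill (f : freePairs Z D → K) (s : Sym2 α) : K :=
  extendByZero f s - ∑ a ∈ D, if s = s(a, a) then ∑ b, extendByZero f s(a, b) else 0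

theorem extendByZero_of_notMem {f : freePairs Z D → K} {s : Sym2 α}
    (hs : s ∉ freePairs Z D) : extendByZero f s = 0 :=
  dif_neg hs

theorem fill_of_mem {f : freePairs Z D → K} {s : Sym2 α} (hs : s ∈ freePairs Z D) :
    fill f s = f ⟨s, hs⟩ := by
  have hdiag : ∀ a ∈ D, s ≠ s(a, a) := fun a ha h => by
    simp only [freePairs, mem_sdiff, mem_union, mem_image] at hs
    exact hs.2 (Or.inr ⟨a, ha, h.symm⟩)
  simp [fill, extendByZero, hs, sum_ite_of_false hdiag]

theorem sum_fill_eq_zero (f : freePairs Z D → K) {a : α} (ha : a ∈ D) :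
    ∑ b, fill f s(a, b) = 0 := by
  have hdiag : ∀ b,
      (∑ a' ∈ D, if s(a, b) = s(a', a') then ∑ c, extendByZero f s(a', c) else 0) =
        if b = a then ∑ c, extendByZero f s(a, c) else 0 := by
    intro b
    rcases eq_or_ne b a with rfl | hb
    · simp [ha]
    · refine (sum_eq_zero fun a' _ => if_neg ?_).trans (if_neg hb).symm
      rw [Sym2.eq_iff]
      rintro (⟨rfl, rfl⟩ | ⟨rfl, rfl⟩) <;> exact hb rfl
  simp only [fill, sum_sub_distrib, hdiag, sum_ite_eq', mem_univ, if_true, sub_self]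

theorem fill_mem (hD : ∀ a ∈ D, s(a, a) ∉ Z) (f : freePairs Z D → K) :
    fill f ∈ zeroRowSumSubmodule K Z D := by
  refine ⟨fun s hs => ?_, fun a ha => sum_fill_eq_zero f ha⟩
  have hfree : s ∉ freePairs Z D := by simp [freePairs, hs]
  have hdiag : ∀ a ∈ D, s ≠ s(a, a) := fun a ha h => hD a ha (h ▸ hs)
  simp [fill, extendByZero_of_notMem hfree, sum_ite_of_false hdiag]

theorem eq_zero_of_forall_freePairs {g : Sym2 α → K} (hg : g ∈ zeroRowSumSubmodule K Z D)
    (hfree : ∀ s ∈ freePairs Z D, g s = 0) : g = 0 := by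
  have hoff : ∀ s ∉ D.image (fun a => s(a, a)), g s = 0 := fun s hs => by
    by_cases hsF : s ∈ freePairs Z D
    · exact hfree s hsF
    · exact hg.1 s (by simpa [freePairs, hs] using hsF)
  funext s
  by_cases hs : s ∈ D.image (fun a => s(a, a))
  · obtain ⟨a, ha, rfl⟩ := mem_image.mp hs
    refine (sum_eq_single a (fun b _ hba => hoff _ ?_) (by simp)).symm.trans (hg.2 a ha)
    simp only [mem_image, Sym2.eq_iff, not_exists, not_and]
    rintro c - (⟨rfl, rfl⟩ | ⟨rfl, rfl⟩) <;> exact hba rfl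
  · exact hoff s hs

end freePairs

open freePairs in
theorem finrank_zeroRowSumSubmodule {Z : Finset (Sym2 α)} {D : Finset α}
    (hD : ∀ a ∈ D, s(a, a) ∉ Z) :
    Module.finrank K (zeroRowSumSubmodule K Z D) = #(freePairs Z D) := by
  let restrict : zeroRowSumSubmodule K Z D →ₗ[K] (freePairs Z D → K) :=
    (LinearMap.funLeft K K Subtype.val).comp (zeroRowSumSubmodule K Z D).subtype
  have hinj : Function.Injective restrict := by
    refine (injective_iff_map_eq_zero restrict).mpr fun g hg => Subtype.ext ?_
    exact eq_zero_of_forall_freePairs g.2 fun s hs => congr_fun hg ⟨s, hs⟩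
  have hsurj : Function.Surjective restrict := fun f =>
    ⟨⟨fill f, fill_mem hD f⟩, funext fun s => fill_of_mem s.2⟩
  rw [(LinearEquiv.ofBijective restrict ⟨hinj, hsurj⟩).finrank_eq,
    Module.finrank_fintype_fun_eq_card, Fintype.card_coe]

end RowSum

theorem Module.Basis.forall_apply_eq_zero_iff {R M N ι : Type*} [Semiring R] [AddCommMonoid M]
    [Module R M] [AddCommMonoid N] [Module R N] (b : Module.Basis ι R M) (f : M →ₗ[R] N) :
    (∀ x, f x = 0) ↔ ∀ i, f (b i) = 0 :=
  ⟨fun h i => h (b i), fun h x => LinearMap.congr_fun (b.ext (f₂ := 0) h) x⟩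

section Sym2Form

variable {R M ι : Type*} [CommSemiring R] [AddCommMonoid M] [Module R M] [Fintype ι]
  [DecidableEq ι] (b : Module.Basis ι R M)

def sym2Form : (Sym2 ι → R) →ₗ[R] M →ₗ[R] M →ₗ[R] R where
  toFun g := Matrix.toLinearMap₂ b b (Matrix.of fun p q => g s(p, q))
  map_add' g h := by rw [← map_add]; rfl
  map_smul' c g := by rw [← map_smul]; rfl

theorem sym2Form_apply_basis (g : Sym2 ι → R) (p q : ι) :
    sym2Form b g (b p) (b q) = g s(p, q) :=
  Matrix.toLinearMap₂_apply_basis b b _ p q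

theorem sym2Form_injective : Function.Injective (sym2Form b) := fun g h hgh => funext <|
  Sym2.ind fun p q => by rw [← sym2Form_apply_basis b g, hgh, sym2Form_apply_basis]

theorem sym2Form_comm (g : Sym2 ι → R) (x y : M) : sym2Form b g x y = sym2Form b g y x := by
  have hflip : (sym2Form b g).flip = sym2Form b g := by
    refine LinearMap.ext_basis b b fun p q => ?_
    rw [LinearMap.flip_apply, sym2Form_apply_basis, sym2Form_apply_basis, Sym2.eq_swap]
  exact LinearMap.congr_fun₂ hflip.symm x y

theorem exists_sym2Form_eq {A : M →ₗ[R] M →ₗ[R] R} (hA : ∀ x y, A x y = A y x) :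
    ∃ g, sym2Form b g = A :=
  ⟨Sym2.lift ⟨fun p q => A (b p) (b q), fun p q => hA _ _⟩,
    LinearMap.ext_basis b b fun p q => by rw [sym2Form_apply_basis, Sym2.lift_mk]⟩

theorem finrank_eq_of_sym2Form_mem_iff {K M ι : Type*} [Field K] [AddCommGroup M] [Module K M]
    [Fintype ι] [DecidableEq ι] (b : Module.Basis ι K M)
    {S : Submodule K (M →ₗ[K] M →ₗ[K] K)}
    {W : Submodule K (Sym2 ι → K)} (hS : ∀ A ∈ S, ∀ x y, A x y = A y x)
    (hW : ∀ g, sym2Form b g ∈ S ↔ g ∈ W) :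
    Module.finrank K S = Module.finrank K W := by
  have hmap : W.map (sym2Form b) = S := by
    ext A
    refine ⟨fun ⟨g, hg, hgA⟩ => hgA ▸ (hW g).mpr hg, fun hA => ?_⟩
    obtain ⟨g, rfl⟩ := exists_sym2Form_eq b (hS A hA)
    exact ⟨g, (hW g).mp hA, rfl⟩
  rw [← hmap, (Submodule.equivMapOfInjective _ (sym2Form_injective b) W).finrank_eq]

end Sym2Form

/-- `hvBasis n (inl i) = h_{i+1}` and `hvBasis n (inr i) = v_{i+1}`; for `n = m + 1` the index
`Fin.last m` belongs to `h_n = S` and `v_n = C`. -/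
def hvBasis (n : ℕ) : Module.Basis (Fin n ⊕ Fin n) ℝ (V n) :=
  (Pi.basisFun ℝ (Fin n)).prod (Pi.basisFun ℝ (Fin n))

section Coordinates

variable {n : ℕ}

theorem dlt_eq_single {j : ℕ} (i : Fin n) (h : (i : ℕ) + 1 = j) : dlt n j = Pi.single i 1 := by
  ext i'
  simp [dlt, Pi.single_apply, ← h, Fin.val_inj]

theorem hvec_eq_hvBasis {j : ℕ} (i : Fin n) (h : (i : ℕ) + 1 = j) :
    hvec n j = hvBasis n (inl i) := by
  simp [hvec, hvBasis, dlt_eq_single i h]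

theorem vvec_eq_hvBasis {j : ℕ} (i : Fin n) (h : (i : ℕ) + 1 = j) :
    vvec n j = hvBasis n (inr i) := by
  simp [vvec, hvBasis, dlt_eq_single i h]

theorem Jmap_hvBasis_inl (i : Fin n) : Jmap n (hvBasis n (inl i)) = hvBasis n (inr i) := by
  simp [Jmap, hvBasis]

theorem Jmap_hvBasis_inr (i : Fin n) : Jmap n (hvBasis n (inr i)) = 0 := by
  simp [Jmap, hvBasis]

end Coordinates

section LastIndex

variable {m : ℕ}

theorem Svec_eq_hvBasis : Svec (m + 1) = hvBasis (m + 1) (inl (Fin.last m)) :=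
  hvec_eq_hvBasis _ rfl

theorem Cvec_eq_hvBasis : Cvec (m + 1) = hvBasis (m + 1) (inr (Fin.last m)) :=
  vvec_eq_hvBasis _ rfl

theorem evec_eq_hvBasis_of_ne_last {i : Fin (m + 1)} (hi : i ≠ Fin.last m) :
    evec (m + 1) (i + 1) = hvBasis (m + 1) (inl i) := by
  rw [evec, if_pos (by simpa using Fin.val_lt_last hi)]
  exact hvec_eq_hvBasis i rfl

theorem evec_self : evec (m + 1) (m + 1) =
    hvBasis (m + 1) (inl (Fin.last m)) + ∑ c, hvBasis (m + 1) (inr c) := by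
  rw [evec, if_neg (lt_irrefl _), if_pos rfl, Svec_eq_hvBasis,
    ← Finset.Ico_add_one_right_eq_Icc, sum_Ico_eq_sum_range, Nat.add_sub_cancel,
    ← Fin.sum_univ_eq_sum_range]
  simp only [vvec_eq_hvBasis _ (add_comm _ _)]

end LastIndex

section Membership

variable {m k : ℕ}

theorem forall_apply_Cvec_eq_zero_iff (A : Bil (m + 1)) :
    (∀ X, A X (Cvec (m + 1)) = 0) ↔
      ∀ p, A (hvBasis (m + 1) p) (hvBasis (m + 1) (inr (Fin.last m))) = 0 := by
  rw [Cvec_eq_hvBasis]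
  exact (hvBasis (m + 1)).forall_apply_eq_zero_iff (A.flip _)

theorem spray_condition_iff (A : Bil (m + 1)) (hC : ∀ X, A X (Cvec (m + 1)) = 0) :
    (∀ X, A (Svec (m + 1)) (Jmap (m + 1) X) = A X (Cvec (m + 1))) ↔
      ∀ j, A (hvBasis (m + 1) (inl (Fin.last m))) (hvBasis (m + 1) (inr j)) = 0 := by
  simp only [hC]
  refine ((hvBasis (m + 1)).forall_apply_eq_zero_iff
    ((A (Svec (m + 1))).comp (Jmap (m + 1)))).trans ?_
  simp [Jmap_hvBasis_inl, Jmap_hvBasis_inr, Svec_eq_hvBasis]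

theorem evec_condition_iff (A : Bil (m + 1)) (hk : k ≤ m + 1) :
    (∀ j, 1 ≤ j → j ≤ k → ∀ X, A (evec (m + 1) j) X = 0) ↔
      (∀ i : Fin (m + 1), (i : ℕ) < k → i ≠ Fin.last m →
        ∀ q, A (hvBasis (m + 1) (inl i)) (hvBasis (m + 1) q) = 0) ∧
      (m < k → ∀ q, A (hvBasis (m + 1) (inl (Fin.last m))) (hvBasis (m + 1) q) +
        ∑ c, A (hvBasis (m + 1) (inr c)) (hvBasis (m + 1) q) = 0) := by
  simp only [fun j => (hvBasis (m + 1)).forall_apply_eq_zero_iff (A (evec (m + 1) j))]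
  constructor
  · intro h
    refine ⟨fun i hik hi q => ?_, fun hmk q => ?_⟩
    · simpa [evec_eq_hvBasis_of_ne_last hi] using h (i + 1) (by omega) hik q
    · simpa [evec_self] using h (m + 1) (by omega) hmk q
  · rintro ⟨hlt, hlast⟩ j hj hjk q
    obtain ⟨i, rfl⟩ : ∃ i, j = i + 1 := ⟨j - 1, by omega⟩
    rcases Nat.lt_succ_iff_lt_or_eq.mp (show i < m + 1 by omega) with hi | rfl
    · have hne : (⟨i, by omega⟩ : Fin (m + 1)) ≠ Fin.last m := Fin.ne_of_lt hi
      simpa [evec_eq_hvBasis_of_ne_last hne] using hlt _ (by simpa using hjk) hne q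
    · simpa [evec_self] using hlast (by omega) q

theorem mem_g2P1e_iff_hvBasis (A : Bil (m + 1)) (hk : k ≤ m + 1) :
    A ∈ g2P1e (m + 1) k ↔ (∀ X Y, A X Y = A Y X) ∧
      (∀ p, A (hvBasis (m + 1) p) (hvBasis (m + 1) (inr (Fin.last m))) = 0) ∧
      (∀ j, A (hvBasis (m + 1) (inl (Fin.last m))) (hvBasis (m + 1) (inr j)) = 0) ∧
      (∀ i : Fin (m + 1), (i : ℕ) < k → i ≠ Fin.last m →
        ∀ q, A (hvBasis (m + 1) (inl i)) (hvBasis (m + 1) q) = 0) ∧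
      (m < k → ∀ q, A (hvBasis (m + 1) (inl (Fin.last m))) (hvBasis (m + 1) q) +
        ∑ c, A (hvBasis (m + 1) (inr c)) (hvBasis (m + 1) q) = 0) := by
  rw [← evec_condition_iff A hk, ← forall_apply_Cvec_eq_zero_iff A]
  exact and_congr_right' <| and_congr_right fun hC => and_congr_left' (spray_condition_iff A hC)

theorem sym2Form_mem_g2P1e_iff (g : Sym2 (Fin (m + 1) ⊕ Fin (m + 1)) → ℝ) (hk : k ≤ m + 1) :
    sym2Form (hvBasis (m + 1)) g ∈ g2P1e (m + 1) k ↔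
      (∀ p, g s(p, inr (Fin.last m)) = 0) ∧ (∀ j, g s(inl (Fin.last m), inr j) = 0) ∧
      (∀ i : Fin (m + 1), (i : ℕ) < k → i ≠ Fin.last m → ∀ q, g s(inl i, q) = 0) ∧
      (m < k → ∀ q, g s(inl (Fin.last m), q) + ∑ c, g s(inr c, q) = 0) := by
  rw [mem_g2P1e_iff_hvBasis _ hk, and_iff_right (sym2Form_comm _ g)]
  simp only [sym2Form_apply_basis]

end Membership

theorem Finset.forall_mem_compl_sym2_iff {α β : Type*} [Fintype α] [DecidableEq α] [Zero β]
    (A : Finset α) (g : Sym2 α → β) :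
    (∀ s ∈ A.sym2ᶜ, g s = 0) ↔ ∀ a ∉ A, ∀ b, g s(a, b) = 0 := by
  refine ⟨fun h a ha b => h _ (by simp [ha]), fun h s hs => ?_⟩
  induction s using Sym2.ind with
  | _ a b =>
    simp only [mem_compl, mk_mem_sym2_iff, not_and_or] at hs
    rcases hs with ha | hb
    · exact h a ha b
    · rw [Sym2.eq_swap]; exact h b hb a

section Reduction

variable {m k : ℕ}

def liveIndices (m k : ℕ) : Finset (Fin (m + 1) ⊕ Fin (m + 1)) :=
  (univ.filter fun i : Fin (m + 1) => k ≤ (i : ℕ)).disjSum (univ.erase (Fin.last m))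

def sprayPairs (m : ℕ) : Finset (Sym2 (Fin (m + 1) ⊕ Fin (m + 1))) :=
  univ.image fun j => s(inl (Fin.last m), inr j)

def forcedZeroPairs (m k : ℕ) : Finset (Sym2 (Fin (m + 1) ⊕ Fin (m + 1))) :=
  (liveIndices m k).sym2ᶜ ∪ sprayPairs m

def zeroRowSumIndices (m k : ℕ) : Finset (Fin (m + 1) ⊕ Fin (m + 1)) :=
  if m < k then liveIndices m k else ∅

theorem inl_mem_liveIndices {i : Fin (m + 1)} : inl i ∈ liveIndices m k ↔ k ≤ (i : ℕ) := by
  simp [liveIndices]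

theorem inr_mem_liveIndices {j : Fin (m + 1)} : inr j ∈ liveIndices m k ↔ j ≠ Fin.last m := by
  simp [liveIndices]

theorem sum_inr_eq_of_forall_inl {g : Sym2 (Fin (m + 1) ⊕ Fin (m + 1)) → ℝ}
    (hrow : ∀ i q, g s(inl i, q) = 0) (j : Fin (m + 1)) :
    ∑ q, g s(inr j, q) = ∑ c, g s(inr c, inr j) := by
  simp only [Fintype.sum_sum_type, hrow, sum_const_zero, zero_add, Sym2.eq_swap (a := inr j)]

theorem forall_notMem_liveIndices_iff (g : Sym2 (Fin (m + 1) ⊕ Fin (m + 1)) → ℝ) :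
    (∀ a ∉ liveIndices m k, ∀ q, g s(a, q) = 0) ↔
      (∀ i : Fin (m + 1), (i : ℕ) < k → ∀ q, g s(inl i, q) = 0) ∧
        ∀ q, g s(inr (Fin.last m), q) = 0 := by
  simp [Sum.forall, inl_mem_liveIndices, inr_mem_liveIndices]

theorem sym2Form_mem_g2P1e_iff_mem_zeroRowSumSubmodule
    (g : Sym2 (Fin (m + 1) ⊕ Fin (m + 1)) → ℝ) (hk : k ≤ m + 1) :
    sym2Form (hvBasis (m + 1)) g ∈ g2P1e (m + 1) k ↔
      g ∈ zeroRowSumSubmodule ℝ (forcedZeroPairs m k) (zeroRowSumIndices m k) := by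
  rw [sym2Form_mem_g2P1e_iff g hk, mem_zeroRowSumSubmodule, forcedZeroPairs, sprayPairs,
    forall_mem_union, forall_mem_compl_sym2_iff, forall_notMem_liveIndices_iff, forall_mem_image]
  simp only [mem_univ, forall_const]
  constructor
  · rintro ⟨hC, hS, hE, hEn⟩
    have hrow : ∀ i : Fin (m + 1), (i : ℕ) < k → ∀ q, g s(inl i, q) = 0 := by
      intro i hi q
      rcases eq_or_ne i (Fin.last m) with rfl | hil
      · have hmk : m < k := by simpa using hi
        rcases q with i' | j
        · rcases eq_or_ne i' (Fin.last m) with rfl | hi'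
          · simpa [Sym2.eq_swap (a := inr _), hS] using hEn hmk (inl (Fin.last m))
          · rw [Sym2.eq_swap]; exact hE i' (by omega) hi' _
        · exact hS j
      · exact hE i hi hil q
    refine ⟨⟨⟨hrow, fun q => by rw [Sym2.eq_swap]; exact hC q⟩, hS⟩, fun a ha => ?_⟩
    unfold zeroRowSumIndices at ha
    split_ifs at ha with hmk
    · rcases a with i | j
      · exact absurd (inl_mem_liveIndices.mp ha) (by omega)
      · rw [sum_inr_eq_of_forall_inl (fun i => hrow i (by omega)) j]
        simpa [hS] using hEn hmk (inr j)
    · simp at ha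
  · rintro ⟨⟨⟨hrow, hCrow⟩, hS⟩, hD⟩
    refine ⟨fun p => by rw [Sym2.eq_swap]; exact hCrow p, hS, fun i hi _ => hrow i hi,
      fun hmk q => ?_⟩
    have hrow' : ∀ i q, g s(inl i, q) = 0 := fun i => hrow i (by omega)
    rw [hrow', zero_add]
    rcases q with i | j
    · simp [Sym2.eq_swap (a := inr _), hrow']
    · rcases eq_or_ne j (Fin.last m) with rfl | hj
      · simp [Sym2.eq_swap (a := inr _) (b := inr (Fin.last m)), hCrow]
      · rw [← sum_inr_eq_of_forall_inl hrow']
        exact hD _ (by simp [zeroRowSumIndices, hmk, inr_mem_liveIndices, hj])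

theorem diag_notMem_forcedZeroPairs :
    ∀ a ∈ zeroRowSumIndices m k, s(a, a) ∉ forcedZeroPairs m k := by
  intro a ha
  have hlive : a ∈ liveIndices m k := by
    unfold zeroRowSumIndices at ha
    split_ifs at ha
    exacts [ha, absurd ha (notMem_empty a)]
  simp only [forcedZeroPairs, sprayPairs, mem_union, mem_compl, mk_mem_sym2_iff, hlive, and_self,
    not_true_eq_false, mem_image, false_or]
  rintro ⟨j, -, h⟩
  rcases Sym2.eq_iff.mp h with ⟨rfl, h⟩ | ⟨rfl, h⟩ <;> cases h

end Reduction

theorem Nat.choose_two_add_add_one_sub (a b : ℕ) :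
    (a + b + 1).choose 2 - b = a * (a + 1) / 2 + a * b + (b - 1) * b / 2 := by
  rcases b with _ | b
  · simp [Nat.choose_two_right, mul_comm]
  have ha := Nat.even_mul_succ_self a
  have hb := Nat.even_mul_succ_self b
  have hab := Nat.even_mul_succ_self (a + b + 1)
  rw [Nat.choose_two_right, Nat.add_sub_cancel]
  simp only [Nat.add_sub_cancel, Nat.even_iff] at *
  have e : (a + (b + 1) + 1) * (a + (b + 1)) =
      a * (a + 1) + 2 * (a * (b + 1)) + b * (b + 1) + 2 * (b + 1) := by ring
  have e2 : (a + b + 1) * (a + b + 1 + 1) = (a + (b + 1) + 1) * (a + (b + 1)) := by ring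
  omega

theorem Fin.card_filter_le_val (n k : ℕ) :
    #(univ.filter fun i : Fin n => k ≤ (i : ℕ)) = n - k := by
  rw [← Nat.card_Ico k n, ← card_map Fin.valEmbedding]
  congr 1
  ext a
  simp only [mem_map, mem_filter, mem_univ, true_and, Fin.valEmbedding_apply, mem_Ico]
  exact ⟨by rintro ⟨i, hi, rfl⟩; exact ⟨hi, i.isLt⟩,
    fun ⟨ha, han⟩ => ⟨⟨a, han⟩, ha, rfl⟩⟩

section Counting

variable {m k : ℕ}

theorem card_liveIndices : #(liveIndices m k) = m + 1 - k + m := by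
  rw [liveIndices, card_disjSum, Fin.card_filter_le_val, card_erase_of_mem (mem_univ _),
    card_univ, Fintype.card_fin, Nat.add_sub_cancel]

theorem card_freePairs : #(freePairs (forcedZeroPairs m k) (zeroRowSumIndices m k)) =
    (m + 1 - k + m + 1).choose 2 - m := by
  set T := sprayPairs m
  set S := (liveIndices m k).sym2
  have hfree : freePairs (forcedZeroPairs m k) (zeroRowSumIndices m k) =
      S \ (T ∪ (zeroRowSumIndices m k).image fun a => s(a, a)) := by
    ext s; simp only [freePairs, forcedZeroPairs, mem_sdiff, mem_univ, mem_union, mem_compl]; tauto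
  rw [hfree, card_sdiff, card_sym2, card_liveIndices]
  congr 1
  by_cases hmk : m < k
  · have : (T ∪ (zeroRowSumIndices m k).image fun a => s(a, a)) ∩ S =
        (liveIndices m k).image fun a => s(a, a) := by
      ext s
      induction s using Sym2.ind with
      | _ a b =>
        rcases a with i | i <;> rcases b with j | j <;>
          simp [T, S, sprayPairs, zeroRowSumIndices, hmk, inl_mem_liveIndices,
            inr_mem_liveIndices] <;>
          grind
    rw [this, card_image_of_injective _ (fun a b h => by simpa using h), card_liveIndices]
    omega
  · have : (T ∪ (zeroRowSumIndices m k).image fun a => s(a, a)) ∩ S =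
        (univ.erase (Fin.last m)).image fun j => s(inl (Fin.last m), inr j) := by
      ext s
      induction s using Sym2.ind with
      | _ a b =>
        rcases a with i | i <;> rcases b with j | j <;>
          simp [T, S, sprayPairs, zeroRowSumIndices, hmk, inl_mem_liveIndices,
            inr_mem_liveIndices] <;>
          grind
    rw [this, card_image_of_injective _ (fun a b h => by simpa using h),
      card_erase_of_mem (mem_univ _)]
    simp

end Counting

theorem dim_g2P1e_general (n k : ℕ) (hn : 1 ≤ n) (hk2 : k ≤ n) :
    Module.finrank ℝ (g2P1e n k) =
      (n - k) * (n - k + 1) / 2 + (n - k) * (n - 1) + (n - 2) * (n - 1) / 2 := by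
  obtain ⟨m, rfl⟩ : ∃ m, n = m + 1 := ⟨n - 1, by omega⟩
  rw [finrank_eq_of_sym2Form_mem_iff (hvBasis (m + 1))
      (fun A (hA : A ∈ g2P1e (m + 1) k) => hA.1)
      (fun g => sym2Form_mem_g2P1e_iff_mem_zeroRowSumSubmodule g hk2),
    finrank_zeroRowSumSubmodule diag_notMem_forcedZeroPairs, card_freePairs,
    Nat.choose_two_add_add_one_sub, Nat.add_sub_cancel, show m + 1 - 2 = m - 1 by omega]

/-- for `1 ≤ k ≤ n` the subspace `g₂(P₁)_{e₁…e_k}` has dimension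
`(n−k)(n−k+1)/2 + (n−k)(n−1) + (n−2)(n−1)/2`. -/
theorem dim_g2P1e (n k : ℕ) (hn : 1 ≤ n) (hk1 : 1 ≤ k) (hk2 : k ≤ n) :
    Module.finrank ℝ (g2P1e n k) =
      (n - k) * (n - k + 1) / 2 + (n - k) * (n - 1) + (n - 2) * (n - 1) / 2 :=
  dim_g2P1e_general n k hn hk2
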